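/- Let n ≥ 1 and M ≥ 2 be natural numbers, p > 0 a real, and e, e' ∈ ℝ^n with 0 ≤ e_k ≤ e'_k ≤ p for every k. Then for every index i, R_i(e) ≤ R_i(e'), where R_i(x) = p + x_i + (S_{M−1}(x) − x_i)/(M − S_{M−1}(x)/p), and S_{M−1}(x) denotes the sum of the min(M−1, n) largest entries of the vector x. That is, the FIFO completion-time bound of every task is monotonically nondecreasing in the execution costs of all tasks: the longer the selected re-identification modules execute, the larger each task's completion-time bound, hence the less chance the task system has to pass admission control. -/
import Mathlib


/-- The sum of the `min (M-1) n` … more generally the `k` largest entries of a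
vector `x : Fin n → ℝ`, defined as the maximum over all `k`-element subsets `S`
of `{1,…,n}` of `∑_{i ∈ S} x i`. -/
noncomputable def topSum (n k : ℕ) (x : Fin n → ℝ) : ℝ :=
  sSup ((fun S : Finset (Fin n) => ∑ i ∈ S, x i) '' {S | S.card = k})

lemma topSum_le (n k : ℕ) (x : Fin n → ℝ) (c : ℝ) (hk : k ≤ n)
    (h : ∀ S : Finset (Fin n), S.card = k → ∑ i ∈ S, x i ≤ c) :
    topSum n k x ≤ c := by
  apply csSup_le
  · obtain ⟨S, _, hS⟩ := Finset.exists_subset_card_eq (s := (Finset.univ : Finset (Fin n))) (n := k) (by simpa using hk)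
    exact ⟨_, ⟨S, hS, rfl⟩⟩
  · rintro y ⟨S, hS, rfl⟩; exact h S hS

lemma le_topSum (n k : ℕ) (x : Fin n → ℝ) (S : Finset (Fin n)) (hS : S.card = k) :
    ∑ i ∈ S, x i ≤ topSum n k x := by
  apply le_csSup
  · exact ((Set.toFinite _).image _).bddAbove
  · exact ⟨S, hS, rfl⟩

/-- For `n ≥ 1` tasks, `M ≥ 2` processors, common period `p > 0`,
and execution-cost vectors `e, e'` with `0 ≤ e k ≤ e' k ≤ p` for all `k`,
the FIFO completion-time bound
`R_i(x) = p + x_i + (S_{M−1}(x) − x_i) / (M − S_{M−1}(x)/p)`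
(with `S_{M−1}(x)` the sum of the `min (M−1) n` largest entries of `x`)
is monotone: `R_i(e) ≤ R_i(e')` for every task `i`. -/
theorem completion_bound_monotone
    (n M : ℕ) (hn : 1 ≤ n) (hM : 2 ≤ M)
    (p : ℝ) (hp : 0 < p)
    (e e' : Fin n → ℝ)
    (he0 : ∀ k, 0 ≤ e k) (hee' : ∀ k, e k ≤ e' k) (he'p : ∀ k, e' k ≤ p)
    (i : Fin n) :
    p + e i + (topSum n (min (M - 1) n) e - e i) /
        ((M : ℝ) - topSum n (min (M - 1) n) e / p)
      ≤
    p + e' i + (topSum n (min (M - 1) n) e' - e' i) /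
        ((M : ℝ) - topSum n (min (M - 1) n) e' / p) := by
  set k := min (M - 1) n with hk
  have hkn : k ≤ n := min_le_right _ _
  have hk1 : 1 ≤ k := le_min (by omega) hn
  set A := topSum n k e with hA
  set B := topSum n k e' with hB
  -- i belongs to some k-element set
  obtain ⟨T, hiT, hTcard⟩ := Finset.exists_superset_card_eq
    (s := ({i} : Finset (Fin n))) (by simpa using hk1) (by simpa using hkn)
  have hiT' : i ∈ T := hiT (Finset.mem_singleton_self i)
  have hie : e i ≤ A := by
    refine le_trans ?_ (le_topSum n k e T hTcard)
    exact Finset.single_le_sum (fun j _ => he0 j) hiT'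
  -- A ≤ B
  have hAB : A ≤ B := by
    apply topSum_le n k e _ hkn
    intro S hS
    exact (Finset.sum_le_sum fun j _ => hee' j).trans (le_topSum n k e' S hS)
  -- B ≤ (M-1)*p
  have hkM : (k : ℝ) ≤ (M : ℝ) - 1 := by
    have : (k : ℝ) ≤ ((M - 1 : ℕ) : ℝ) := by exact_mod_cast min_le_left _ _
    have h1 : ((M - 1 : ℕ) : ℝ) = (M : ℝ) - 1 := by
      have : (1 : ℕ) ≤ M := by omega
      push_cast [Nat.cast_sub this]; ring
    linarith [h1 ▸ this]
  have hBub : B ≤ ((M : ℝ) - 1) * p := by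
    apply topSum_le n k e' _ hkn
    intro S hS
    calc ∑ j ∈ S, e' j ≤ ∑ _j ∈ S, p := Finset.sum_le_sum fun j _ => he'p j
      _ = (k : ℝ) * p := by rw [Finset.sum_const, hS]; simp [nsmul_eq_mul]
      _ ≤ ((M : ℝ) - 1) * p := by nlinarith
  have h1D' : 1 ≤ (M : ℝ) - B / p := by
    have : B / p ≤ (M : ℝ) - 1 := (div_le_iff₀ hp).mpr (by linarith)
    linarith
  have hApBp : A / p ≤ B / p := by gcongr
  have h1D : 1 ≤ (M : ℝ) - A / p := by linarith
  -- Step 1: (A - e i)/D ≤ (B - e i)/D'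
  have step1 : (A - e i) / ((M : ℝ) - A / p) ≤ (B - e i) / ((M : ℝ) - B / p) := by
    apply div_le_div₀ (by linarith) (by linarith) (by linarith) (by linarith)
  -- Step 2
  have hD'pos : 0 < (M : ℝ) - B / p := by linarith
  have split : (B - e i) / ((M : ℝ) - B / p)
      = (B - e' i) / ((M : ℝ) - B / p) + (e' i - e i) / ((M : ℝ) - B / p) := by
    field_simp
    ring
  have hds : (e' i - e i) / ((M : ℝ) - B / p) ≤ e' i - e i :=
    div_le_self (by linarith [hee' i]) h1D'
  linarith
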